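/- arXiv:2402.04635 — 2 statements merged into one kernel-verified Lean document; each statement's English description precedes it below -/
import Mathlib

section
/- Let 1 ≤ p < ∞ and γ ∈ A_p(ℝⁿ). Then there exist δ ∈ (0,1) and C > 0, depending only on n, p, and the A_p constant of γ, such that for every cube Q and every measurable subset S ⊆ Q with |S| > 0, M_S(γ)/M_Q(γ) ≤ C (|S|/|Q|)^{δ−1}. -/
open MeasureTheory ENNReal

noncomputable section

/-- The axis-parallel cube in `ℝⁿ` with lower corner `x` and side length `r`. -/
def cube {n : ℕ} (x : Fin n → ℝ) (r : ℝ) : Set (Fin n → ℝ) :=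
  Set.Icc x (fun i => x i + r)

/-- `M_A(f)`: the average of `f` over `A` (an extended nonnegative real). -/
def avg {n : ℕ} (A : Set (Fin n → ℝ)) (f : (Fin n → ℝ) → ℝ) : ℝ≥0∞ :=
  (volume A)⁻¹ * ∫⁻ y in A, ENNReal.ofReal (f y)

/-- `M_{A,r}(f)`: the `r`-th power mean of `|f|` over `A`. -/
def avgP {n : ℕ} (A : Set (Fin n → ℝ)) (r : ℝ) (f : (Fin n → ℝ) → ℝ) : ℝ≥0∞ :=
  (avg A fun y => |f y| ^ r) ^ (1 / r)

/-- The conjugate exponent `p' = p/(p-1)`. -/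
def conjExp (p : ℝ) : ℝ := p / (p - 1)

/-- A weight: a locally integrable function which is a.e. positive. -/
def IsWeight {n : ℕ} (γ : (Fin n → ℝ) → ℝ) : Prop :=
  LocallyIntegrable γ volume ∧ ∀ᵐ x ∂(volume : Measure (Fin n → ℝ)), 0 < γ x

/-- The `A_p` inequality `M_Q(γ) · M_{Q,p'/p}(γ⁻¹) ≤ C` over all cubes. -/
def ApBound {n : ℕ} (p C : ℝ) (γ : (Fin n → ℝ) → ℝ) : Prop :=
  ∀ (x : Fin n → ℝ) (r : ℝ), 0 < r →
    avg (cube x r) γ * avgP (cube x r) (conjExp p / p) (fun y => (γ y)⁻¹)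
      ≤ ENNReal.ofReal C

/-- The Muckenhoupt class `A_p`, `1 < p < ∞`. -/
def IsAp {n : ℕ} (p : ℝ) (γ : (Fin n → ℝ) → ℝ) : Prop :=
  ∃ C : ℝ, 0 < C ∧ ApBound p C γ

/-- The `A_1` inequality with constant `C`. -/
def A1Bound {n : ℕ} (C : ℝ) (γ : (Fin n → ℝ) → ℝ) : Prop :=
  ∀ (x : Fin n → ℝ) (r : ℝ), 0 < r →
    ∀ᵐ y ∂(volume : Measure (Fin n → ℝ)),
      y ∈ cube x r → avg (cube x r) γ ≤ ENNReal.ofReal (C * γ y)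

/-- The Muckenhoupt class `A_1`. -/
def IsA1 {n : ℕ} (γ : (Fin n → ℝ) → ℝ) : Prop :=
  ∃ C : ℝ, 0 < C ∧ A1Bound C γ

/-! The `A_p` condition (through Hölder's inequality; directly for `A_1`) gives
`γ(Q) (|A|/|Q|)^p ≤ C γ(A)` for `A ⊆ Q`; so on a cube that `S` fills at most half of,
`γ(S ∩ Q) ≤ b γ(Q)` for a fixed `b < 1`. A Calderón–Zygmund stopping time on the dyadic subcubes of `Q`, stopping where `S` has density
above `2^{-(n+1)}`, yields `Ω` containing almost all of `S` (Lebesgue's density theorem) with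
`|Ω| ≤ 2^{n+1} |S|`, while every stopping cube has density at most `1/2`, whence
`γ(S) ≤ b γ(Ω)`. Iterating `M ≈ log₂(|Q|/|S|) / (n+1)` times gives
`γ(S) ≤ b^M γ(Q) ≲ (|S|/|Q|)^δ γ(Q)`. -/

open Set Metric Filter Topology Function

namespace ApReverseRatio

lemma lt_two_mul_measure_inter {α : Type*} [MeasurableSpace α] {μ : Measure α} {S c : Set α}
    (hS : MeasurableSet S) (hc : μ c ≠ ∞) (h : 2 * μ (Sᶜ ∩ c) < μ c) : μ c < 2 * μ (S ∩ c) := by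
  rw [inter_comm Sᶜ, ← sdiff_eq] at h
  rw [inter_comm]
  have hsplit : μ (c ∩ S) + μ (c \ S) = μ c := measure_inter_add_sdiff c hS
  have hd : μ (c \ S) ≠ ∞ := ne_top_of_le_ne_top hc (measure_mono sdiff_subset)
  have hlt : μ (c \ S) < μ (c ∩ S) := by
    rw [← hsplit, two_mul] at h
    exact (ENNReal.add_lt_add_iff_right hd).1 h
  calc μ c = μ (c ∩ S) + μ (c \ S) := hsplit.symm
    _ < μ (c ∩ S) + μ (c ∩ S) := ENNReal.add_lt_add_left
        (ne_top_of_le_ne_top hc (measure_mono inter_subset_left)) hlt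
    _ = 2 * μ (c ∩ S) := (two_mul _).symm

lemma le_two_mul_measure_sdiff {α : Type*} [MeasurableSpace α] {μ : Measure α} {S Q : Set α}
    (hS : MeasurableSet S) (hQ : μ Q ≠ ∞) (h : 2 * μ (S ∩ Q) ≤ μ Q) : μ Q ≤ 2 * μ (Q \ S) := by
  refine (ENNReal.add_le_add_iff_left hQ).1 ?_
  calc μ Q + μ Q = 2 * μ (S ∩ Q) + 2 * μ (Q \ S) := by
        rw [← mul_add, inter_comm, measure_inter_add_sdiff Q hS, two_mul]
    _ ≤ μ Q + 2 * μ (Q \ S) := by gcongr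

lemma mem_Ico_iff_floor {a h y : ℝ} (hh : 0 < h) {m : ℕ} :
    y ∈ Ico (a + m * h) (a + m * h + h) ↔ a ≤ y ∧ ⌊(y - a) / h⌋₊ = m := by
  have hmh : 0 ≤ (m : ℝ) * h := mul_nonneg m.cast_nonneg hh.le
  constructor
  · rintro ⟨h1, h2⟩
    have ha : a ≤ y := by linarith
    refine ⟨ha, (Nat.floor_eq_iff (div_nonneg (sub_nonneg.2 ha) hh.le)).2 ⟨?_, ?_⟩⟩
    · rw [le_div_iff₀ hh]; linarith
    · rw [div_lt_iff₀ hh]; linarith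
  · rintro ⟨ha, hm⟩
    obtain ⟨h1, h2⟩ := (Nat.floor_eq_iff (div_nonneg (sub_nonneg.2 ha) hh.le)).1 hm
    rw [le_div_iff₀ hh] at h1
    rw [div_lt_iff₀ hh] at h2
    constructor <;> linarith

variable {n : ℕ}

-- Half-open, so that the dyadic subcubes of a cube are disjoint; it differs from `cube` by a
-- null set.
def cubeIco (z : Fin n → ℝ) (s : ℝ) : Set (Fin n → ℝ) :=
  univ.pi fun i => Ico (z i) (z i + s)

lemma measurableSet_cube {z : Fin n → ℝ} {s : ℝ} : MeasurableSet (cube z s) :=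
  measurableSet_Icc

lemma measurableSet_cubeIco {z : Fin n → ℝ} {s : ℝ} : MeasurableSet (cubeIco z s) :=
  .univ_pi fun _ => measurableSet_Ico

lemma cubeIco_ae_eq_cube (z : Fin n → ℝ) (s : ℝ) : cubeIco z s =ᵐ[volume] cube z s :=
  Measure.univ_pi_Ico_ae_eq_Icc

lemma cubeIco_subset_cube (z : Fin n → ℝ) (s : ℝ) : cubeIco z s ⊆ cube z s := by
  rw [cube, ← pi_univ_Icc]
  exact pi_mono fun _ _ => Ico_subset_Icc_self

lemma volume_cubeIco (z : Fin n → ℝ) (s : ℝ) :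
    volume (cubeIco z s) = ENNReal.ofReal s ^ n := by
  simp [cubeIco, Real.volume_pi_Ico]

lemma volume_cube (z : Fin n → ℝ) (s : ℝ) : volume (cube z s) = volume (cubeIco z s) :=
  (measure_congr (cubeIco_ae_eq_cube z s)).symm

lemma volume_cubeIco_pos (z : Fin n → ℝ) {s : ℝ} (hs : 0 < s) : 0 < volume (cubeIco z s) := by
  rw [volume_cubeIco]
  exact ENNReal.pow_pos (ENNReal.ofReal_pos.2 hs) n

lemma volume_cubeIco_ne_top (z : Fin n → ℝ) (s : ℝ) : volume (cubeIco z s) ≠ ∞ := by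
  rw [volume_cubeIco]
  exact ENNReal.pow_ne_top ENNReal.ofReal_ne_top

lemma volume_cube_ne_zero (z : Fin n → ℝ) {s : ℝ} (hs : 0 < s) : volume (cube z s) ≠ 0 := by
  rw [volume_cube]
  exact (volume_cubeIco_pos z hs).ne'

lemma volume_cube_ne_top (z : Fin n → ℝ) (s : ℝ) : volume (cube z s) ≠ ∞ := by
  rw [volume_cube]
  exact volume_cubeIco_ne_top z s

section Dyadic

variable (q : Fin n → ℝ) (r : ℝ)

def dyadicCell (k : ℕ) (m : Fin n → ℕ) : Set (Fin n → ℝ) :=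
  cubeIco (fun i => q i + m i * (r / 2 ^ k)) (r / 2 ^ k)

def dyadicIndex (k : ℕ) (x : Fin n → ℝ) : Fin n → ℕ :=
  fun i => ⌊(x i - q i) / (r / 2 ^ k)⌋₊

variable {q r}

lemma mem_dyadicCell (hr : 0 < r) {k : ℕ} {m : Fin n → ℕ} {x : Fin n → ℝ} :
    x ∈ dyadicCell q r k m ↔ q ≤ x ∧ dyadicIndex q r k x = m := by
  have hh : 0 < r / 2 ^ k := by positivity
  simp only [dyadicCell, cubeIco, mem_univ_pi, mem_Ico_iff_floor hh, forall_and, Pi.le_def,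
    funext_iff, dyadicIndex]

lemma dyadicIndex_eq_div {j k : ℕ} (hjk : j ≤ k) (x : Fin n → ℝ) :
    dyadicIndex q r j x = fun i => dyadicIndex q r k x i / 2 ^ (k - j) := by
  funext i
  have hscale : r / 2 ^ k * 2 ^ (k - j) = r / 2 ^ j := by
    rw [div_mul_eq_mul_div, div_eq_div_iff (by positivity) (by positivity), mul_assoc, ← pow_add,
      Nat.sub_add_cancel hjk]
  rw [dyadicIndex, dyadicIndex, ← Nat.floor_div_natCast, div_div, Nat.cast_pow, Nat.cast_ofNat,
    hscale]

lemma dyadicCell_subset_cubeIco (hr : 0 < r) {k : ℕ} {m : Fin n → ℕ} (hm : ∀ i, m i < 2 ^ k) :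
    dyadicCell q r k m ⊆ cubeIco q r := by
  refine pi_mono fun i _ => Ico_subset_Ico ?_ ?_
  · have : 0 ≤ (m i : ℝ) * (r / 2 ^ k) := by positivity
    linarith
  · have hm' : (m i : ℝ) + 1 ≤ 2 ^ k := by exact_mod_cast hm i
    calc q i + m i * (r / 2 ^ k) + r / 2 ^ k = q i + (m i + 1) * (r / 2 ^ k) := by ring
      _ ≤ q i + 2 ^ k * (r / 2 ^ k) := by gcongr
      _ = q i + r := by field_simp

lemma dyadicIndex_lt (hr : 0 < r) {x : Fin n → ℝ} (hx : x ∈ cubeIco q r) (k : ℕ) (i : Fin n) :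
    dyadicIndex q r k x i < 2 ^ k := by
  obtain ⟨hqx, hxr⟩ := hx i (mem_univ i)
  have hh : 0 < r / 2 ^ k := by positivity
  rw [dyadicIndex, Nat.floor_lt (div_nonneg (sub_nonneg.2 hqx) hh.le), div_lt_iff₀ hh,
    Nat.cast_pow, Nat.cast_ofNat, mul_div_cancel₀ _ (by positivity)]
  linarith

lemma dyadicCell_zero : dyadicCell q r 0 0 = cubeIco q r := by
  simp [dyadicCell]

lemma dyadicCell_succ_subset (hr : 0 < r) (k : ℕ) (m : Fin n → ℕ) :
    dyadicCell q r (k + 1) m ⊆ dyadicCell q r k fun i => m i / 2 := by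
  intro x hx
  obtain ⟨hqx, hxm⟩ := (mem_dyadicCell hr).1 hx
  rw [mem_dyadicCell hr, dyadicIndex_eq_div k.le_succ, hxm]
  simp [hqx]

lemma volume_dyadicCell (k : ℕ) (m : Fin n → ℕ) :
    volume (dyadicCell q r k m) = ENNReal.ofReal (r / 2 ^ k) ^ n :=
  volume_cubeIco _ _

lemma volume_dyadicCell_ne_top (k : ℕ) (m : Fin n → ℕ) : volume (dyadicCell q r k m) ≠ ∞ :=
  volume_cubeIco_ne_top _ _

lemma two_pow_mul_volume_dyadicCell_succ (k : ℕ) (m m' : Fin n → ℕ) :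
    2 ^ n * volume (dyadicCell q r (k + 1) m) = volume (dyadicCell q r k m') := by
  rw [volume_dyadicCell, volume_dyadicCell, ← mul_pow, ← ENNReal.ofReal_ofNat 2,
    ← ENNReal.ofReal_mul zero_le_two, pow_succ, ← div_div, mul_div_cancel₀ _ two_ne_zero]

lemma dyadicCell_subset_closedBall (hr : 0 < r) {k : ℕ} {m : Fin n → ℕ} {x : Fin n → ℝ}
    (hx : x ∈ dyadicCell q r k m) : dyadicCell q r k m ⊆ closedBall x (r / 2 ^ k) := by
  intro y hy
  rw [mem_closedBall, dist_pi_le_iff (by positivity)]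
  intro i
  obtain ⟨hx1, hx2⟩ := hx i (mem_univ i)
  obtain ⟨hy1, hy2⟩ := hy i (mem_univ i)
  rw [Real.dist_eq, abs_le]
  constructor <;> linarith

lemma volume_closedBall_eq_two_pow_mul (hr : 0 < r) (x : Fin n → ℝ) (k : ℕ) (m : Fin n → ℕ) :
    volume (closedBall x (r / 2 ^ k)) = 2 ^ n * volume (dyadicCell q r k m) := by
  rw [Real.volume_pi_closedBall _ (by positivity), volume_dyadicCell, Fintype.card_fin, mul_pow,
    ENNReal.ofReal_mul (by positivity), ENNReal.ofReal_pow (by positivity),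
    ENNReal.ofReal_pow (by positivity), ENNReal.ofReal_ofNat]

end Dyadic

section Stopping

variable (q : Fin n → ℝ) (r : ℝ) (S : Set (Fin n → ℝ))

-- The threshold `2^{-(n+1)}` makes each child of a non-dense cell have density at most `1/2`.
def IsDenseCell (k : ℕ) (m : Fin n → ℕ) : Prop :=
  volume (dyadicCell q r k m) < 2 ^ (n + 1) * volume (S ∩ dyadicCell q r k m)

def IsStopping (km : ℕ × (Fin n → ℕ)) : Prop :=
  (∀ i, km.2 i < 2 ^ km.1) ∧ IsDenseCell q r S km.1 km.2 ∧
    ∀ j < km.1, ¬ IsDenseCell q r S j fun i => km.2 i / 2 ^ (km.1 - j)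

def stoppingSet : Set (Fin n → ℝ) :=
  ⋃ km : {km // IsStopping q r S km}, dyadicCell q r km.1.1 km.1.2

variable {q r S}

lemma IsStopping.fst_le_of_mem (hr : 0 < r) {km km' : ℕ × (Fin n → ℕ)} (h : IsStopping q r S km)
    (h' : IsStopping q r S km') {x : Fin n → ℝ} (hx : x ∈ dyadicCell q r km.1 km.2)
    (hx' : x ∈ dyadicCell q r km'.1 km'.2) : km.1 ≤ km'.1 := by
  by_contra! hlt
  obtain ⟨-, hxm⟩ := (mem_dyadicCell hr).1 hx
  obtain ⟨-, hxm'⟩ := (mem_dyadicCell hr).1 hx'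
  apply h.2.2 km'.1 hlt
  rw [← hxm, ← dyadicIndex_eq_div hlt.le, hxm']
  exact h'.2.1

lemma IsStopping.eq_of_mem (hr : 0 < r) {km km' : ℕ × (Fin n → ℕ)} (h : IsStopping q r S km)
    (h' : IsStopping q r S km') {x : Fin n → ℝ} (hx : x ∈ dyadicCell q r km.1 km.2)
    (hx' : x ∈ dyadicCell q r km'.1 km'.2) : km = km' := by
  have hk := (h.fst_le_of_mem hr h' hx hx').antisymm (h'.fst_le_of_mem hr h hx' hx)
  obtain ⟨-, hxm⟩ := (mem_dyadicCell hr).1 hx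
  obtain ⟨-, hxm'⟩ := (mem_dyadicCell hr).1 hx'
  exact Prod.ext hk (by rw [← hxm, ← hxm', hk])

lemma pairwise_disjoint_stopping (hr : 0 < r) :
    Pairwise (Disjoint on fun km : {km // IsStopping q r S km} => dyadicCell q r km.1.1 km.1.2) :=
  fun km km' hne => disjoint_left.2 fun _ hx hx' =>
    hne (Subtype.ext (km.2.eq_of_mem hr km'.2 hx hx'))

lemma measurableSet_stoppingSet : MeasurableSet (stoppingSet q r S) :=
  .iUnion fun _ => measurableSet_cubeIco

lemma stoppingSet_subset (hr : 0 < r) : stoppingSet q r S ⊆ cubeIco q r :=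
  iUnion_subset fun km => dyadicCell_subset_cubeIco hr km.2.1

lemma measure_inter_stoppingSet (hr : 0 < r) (μ : Measure (Fin n → ℝ)) {T : Set (Fin n → ℝ)}
    (hT : MeasurableSet T) :
    μ (T ∩ stoppingSet q r S) =
      ∑' km : {km // IsStopping q r S km}, μ (T ∩ dyadicCell q r km.1.1 km.1.2) := by
  rw [stoppingSet, inter_iUnion]
  exact measure_iUnion
    (fun _ _ hne => ((pairwise_disjoint_stopping hr hne).inter_left' T).inter_right' T)
    fun _ => hT.inter measurableSet_cubeIco

lemma mem_stoppingSet_of_isDenseCell (hr : 0 < r) {x : Fin n → ℝ} (hx : x ∈ cubeIco q r)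
    (hdense : ∃ k, IsDenseCell q r S k (dyadicIndex q r k x)) : x ∈ stoppingSet q r S := by
  classical
  have hqx : q ≤ x := fun i => (hx i (mem_univ i)).1
  set k := Nat.find hdense
  refine mem_iUnion.2 ⟨⟨(k, dyadicIndex q r k x), fun i => dyadicIndex_lt hr hx k i,
    Nat.find_spec hdense, fun j hj => ?_⟩, (mem_dyadicCell hr).2 ⟨hqx, rfl⟩⟩
  rw [← dyadicIndex_eq_div hj.le]
  exact Nat.find_min hdense hj

lemma isDenseCell_of_volume_compl (hr : 0 < r) (hS : MeasurableSet S) {x : Fin n → ℝ}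
    (hqx : q ≤ x) {k : ℕ}
    (h : volume (Sᶜ ∩ closedBall x (r / 2 ^ k)) / volume (closedBall x (r / 2 ^ k)) <
      (2 ^ (n + 1))⁻¹) :
    IsDenseCell q r S k (dyadicIndex q r k x) := by
  set c := dyadicCell q r k (dyadicIndex q r k x)
  set B := closedBall x (r / 2 ^ k)
  have hcB : c ⊆ B := dyadicCell_subset_closedBall hr ((mem_dyadicCell hr).2 ⟨hqx, rfl⟩)
  have hB : volume B = 2 ^ n * volume c := volume_closedBall_eq_two_pow_mul hr x k _
  have hc : volume c ≠ ∞ := volume_dyadicCell_ne_top k _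
  have h2n : (2 : ℝ≥0∞) ^ n ≠ 0 := pow_ne_zero n two_ne_zero
  have h2n' : (2 : ℝ≥0∞) ^ n ≠ ∞ := ENNReal.pow_ne_top ENNReal.ofNat_ne_top
  have hB0 : volume B ≠ 0 := by
    rw [hB]
    exact mul_ne_zero h2n (volume_cubeIco_pos _ (by positivity)).ne'
  have hBtop : volume B ≠ ∞ := by
    rw [hB]
    exact ENNReal.mul_ne_top h2n' hc
  have h2n1 : (2 : ℝ≥0∞) ^ (n + 1) ≠ 0 := pow_ne_zero _ two_ne_zero
  have h2n1' : (2 : ℝ≥0∞) ^ (n + 1) ≠ ∞ := ENNReal.pow_ne_top ENNReal.ofNat_ne_top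
  have hcompl : 2 * volume (Sᶜ ∩ c) < volume c := by
    rw [← ENNReal.mul_lt_mul_iff_right h2n h2n', ← hB]
    calc 2 ^ n * (2 * volume (Sᶜ ∩ c)) ≤ 2 ^ (n + 1) * volume (Sᶜ ∩ B) := by
          rw [← mul_assoc, ← pow_succ]
          gcongr
      _ < 2 ^ (n + 1) * ((2 ^ (n + 1))⁻¹ * volume B) :=
          ENNReal.mul_lt_mul_right h2n1 h2n1' ((ENNReal.div_lt_iff (Or.inl hB0) (Or.inl hBtop)).1 h)
      _ = volume B := by rw [← mul_assoc, ENNReal.mul_inv_cancel h2n1 h2n1', one_mul]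
  calc volume c < 2 * volume (S ∩ c) := lt_two_mul_measure_inter hS hc hcompl
    _ ≤ 2 ^ (n + 1) * volume (S ∩ c) := by
      gcongr
      exact le_self_pow₀ one_le_two n.succ_ne_zero

lemma volume_diff_stoppingSet (hr : 0 < r) (hS : MeasurableSet S) (hSQ : S ⊆ cubeIco q r) :
    volume (S \ stoppingSet q r S) = 0 := by
  have hρ : Tendsto (fun k : ℕ => r / 2 ^ k) atTop (𝓝[>] 0) := by
    refine tendsto_nhdsWithin_iff.2 ⟨?_, .of_forall fun k => mem_Ioi.2 (by positivity)⟩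
    simpa [div_eq_mul_inv] using (tendsto_pow_atTop_nhds_zero_of_lt_one (by norm_num : (0:ℝ) ≤ 2⁻¹)
      (by norm_num)).const_mul r
  have hε : (0 : ℝ≥0∞) < (2 ^ (n + 1))⁻¹ :=
    ENNReal.inv_pos.2 (ENNReal.pow_ne_top ENNReal.ofNat_ne_top)
  rw [measure_eq_zero_iff_ae_notMem]
  filter_upwards [Besicovitch.ae_tendsto_measure_inter_div_of_measurableSet volume hS.compl]
    with x hx ⟨hxS, hxΩ⟩
  rw [indicator_of_notMem (not_not.2 hxS)] at hx
  obtain ⟨k, hk⟩ := ((hx.comp hρ).eventually (gt_mem_nhds hε)).exists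
  exact hxΩ (mem_stoppingSet_of_isDenseCell hr (hSQ hxS)
    ⟨k, isDenseCell_of_volume_compl hr hS (fun i => (hSQ hxS i (mem_univ i)).1) hk⟩)

lemma IsStopping.two_mul_volume_inter_le (hr : 0 < r) (h0 : ¬ IsDenseCell q r S 0 0)
    {km : ℕ × (Fin n → ℕ)} (h : IsStopping q r S km) :
    2 * volume (S ∩ dyadicCell q r km.1 km.2) ≤ volume (dyadicCell q r km.1 km.2) := by
  obtain ⟨_ | k, m⟩ := km
  · have hm : m = 0 := funext fun i => Nat.lt_one_iff.1 (h.1 i)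
    exact absurd h.2.1 (hm ▸ h0)
  · have hparent := h.2.2 k k.lt_succ_self
    simp only [IsDenseCell, not_lt, Nat.add_sub_cancel_left, pow_one] at hparent
    rw [← two_pow_mul_volume_dyadicCell_succ k m] at hparent
    refine (ENNReal.mul_le_mul_iff_right (pow_ne_zero n two_ne_zero)
      (ENNReal.pow_ne_top ENNReal.ofNat_ne_top)).1 ?_
    calc 2 ^ n * (2 * volume (S ∩ dyadicCell q r (k + 1) m))
        = 2 ^ (n + 1) * volume (S ∩ dyadicCell q r (k + 1) m) := by ring
      _ ≤ 2 ^ (n + 1) * volume (S ∩ dyadicCell q r k fun i => m i / 2) := by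
        gcongr
        exact dyadicCell_succ_subset hr k m
      _ ≤ 2 ^ n * volume (dyadicCell q r (k + 1) m) := hparent

lemma measure_stoppingSet (hr : 0 < r) (μ : Measure (Fin n → ℝ)) :
    μ (stoppingSet q r S) =
      ∑' km : {km // IsStopping q r S km}, μ (dyadicCell q r km.1.1 km.1.2) :=
  measure_iUnion (pairwise_disjoint_stopping hr) fun _ => measurableSet_cubeIco

lemma volume_stoppingSet_le (hr : 0 < r) (hS : MeasurableSet S) :
    volume (stoppingSet q r S) ≤ 2 ^ (n + 1) * volume S :=
  calc volume (stoppingSet q r S)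
      ≤ ∑' km : {km // IsStopping q r S km},
          2 ^ (n + 1) * volume (S ∩ dyadicCell q r km.1.1 km.1.2) := by
        rw [measure_stoppingSet hr]
        exact ENNReal.tsum_le_tsum fun km => km.2.2.1.le
    _ = 2 ^ (n + 1) * volume (S ∩ stoppingSet q r S) := by
        rw [ENNReal.tsum_mul_left, measure_inter_stoppingSet hr volume hS]
    _ ≤ 2 ^ (n + 1) * volume S := by gcongr; exact inter_subset_left

end Stopping

def CubeDecay (ν : Measure (Fin n → ℝ)) (b : ℝ≥0∞) : Prop :=
  ∀ (z : Fin n → ℝ) (s : ℝ), 0 < s → ∀ S, MeasurableSet S →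
    2 * volume (S ∩ cubeIco z s) ≤ volume (cubeIco z s) →
      ν (S ∩ cubeIco z s) ≤ b * ν (cubeIco z s)

lemma exists_cubeDecay_of_mul_rpow_le {ν : Measure (Fin n → ℝ)} (hν : ν ≪ volume)
    (hfin : ∀ z s, ν (cube z s) ≠ ∞) {p : ℝ} (hp : 0 ≤ p) {K : ℝ≥0∞} (hK : K ≠ ∞)
    (h : ∀ (z : Fin n → ℝ) (s : ℝ), 0 < s → ∀ A ⊆ cube z s, MeasurableSet A →
      ν (cube z s) * (volume A / volume (cube z s)) ^ p ≤ K * ν A) :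
    ∃ b < 1, CubeDecay ν b := by
  set a := (K * 2 ^ p)⁻¹
  refine ⟨1 - a, ENNReal.sub_lt_self ENNReal.one_ne_top one_ne_zero
    (ENNReal.inv_ne_zero.2 (ENNReal.mul_ne_top hK (ENNReal.rpow_ne_top_of_nonneg hp
      ENNReal.ofNat_ne_top))), fun z s hs S hS hhalf => ?_⟩
  set Q := cubeIco z s
  have hνQ : ν (cube z s) = ν Q := (measure_congr (hν.ae_eq (cubeIco_ae_eq_cube z s))).symm
  have hQtop : volume Q ≠ ∞ := volume_cubeIco_ne_top z s
  have hfill : 2⁻¹ ≤ volume (Q \ S) / volume (cube z s) := by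
    rw [volume_cube, ENNReal.le_div_iff_mul_le (Or.inl (volume_cubeIco_pos z hs).ne')
      (Or.inl hQtop)]
    calc 2⁻¹ * volume Q ≤ 2⁻¹ * (2 * volume (Q \ S)) := by
          gcongr
          exact le_two_mul_measure_sdiff hS hQtop hhalf
      _ = volume (Q \ S) := by
        rw [← mul_assoc, ENNReal.inv_mul_cancel two_ne_zero ENNReal.ofNat_ne_top, one_mul]
  have hA : ν Q * a ≤ ν (Q \ S) := by
    have := h z s hs (Q \ S) (sdiff_subset.trans (cubeIco_subset_cube z s))
      (measurableSet_cubeIco.diff hS)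
    have h2p : (2 : ℝ≥0∞) ^ p ≠ ∞ := ENNReal.rpow_ne_top_of_nonneg hp ENNReal.ofNat_ne_top
    have h2p0 : (2 : ℝ≥0∞) ^ p ≠ 0 := (ENNReal.rpow_pos two_pos ENNReal.ofNat_ne_top).ne'
    have h2 : ν Q * (2 ^ p)⁻¹ ≤ K * ν (Q \ S) :=
      calc ν Q * (2 ^ p)⁻¹ = ν (cube z s) * 2⁻¹ ^ p := by rw [ENNReal.inv_rpow, hνQ]
        _ ≤ ν (cube z s) * (volume (Q \ S) / volume (cube z s)) ^ p := by gcongr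
        _ ≤ K * ν (Q \ S) := this
    calc ν Q * a = ν Q * (2 ^ p)⁻¹ / K := by
          rw [show a = K⁻¹ * (2 ^ p)⁻¹ from ENNReal.mul_inv (Or.inr h2p) (Or.inr h2p0),
            div_eq_mul_inv]
          ring
      _ ≤ ν (Q \ S) := ENNReal.div_le_of_le_mul' h2
  have hνsplit : ν (Q ∩ S) + ν (Q \ S) = ν Q := measure_inter_add_sdiff Q hS
  have hQfin : ν Q ≠ ∞ := hνQ ▸ hfin z s
  rw [inter_comm, ENNReal.eq_sub_of_add_eq (ne_top_of_le_ne_top hQfin (measure_mono sdiff_subset))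
    hνsplit, ENNReal.sub_mul fun _ _ => hQfin, one_mul, mul_comm a]
  exact tsub_le_tsub_left hA _

section Iteration

variable {ν : Measure (Fin n → ℝ)} {b : ℝ≥0∞} {q : Fin n → ℝ} {r : ℝ} {S : Set (Fin n → ℝ)}

lemma measure_le_mul_stoppingSet (hν : ν ≪ volume) (hb : CubeDecay ν b) (hr : 0 < r)
    (hS : MeasurableSet S) (hSQ : S ⊆ cubeIco q r) (h0 : ¬ IsDenseCell q r S 0 0) :
    ν S ≤ b * ν (stoppingSet q r S) :=
  calc ν S ≤ ν (S ∩ stoppingSet q r S) + ν (S \ stoppingSet q r S) :=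
        measure_le_inter_add_sdiff _ _ _
    _ = ∑' km : {km // IsStopping q r S km}, ν (S ∩ dyadicCell q r km.1.1 km.1.2) := by
        rw [hν (volume_diff_stoppingSet hr hS hSQ), add_zero, measure_inter_stoppingSet hr ν hS]
    _ ≤ ∑' km : {km // IsStopping q r S km}, b * ν (dyadicCell q r km.1.1 km.1.2) :=
        ENNReal.tsum_le_tsum fun km =>
          hb _ _ (by positivity) S hS (km.2.two_mul_volume_inter_le hr h0)
    _ = b * ν (stoppingSet q r S) := by rw [ENNReal.tsum_mul_left, measure_stoppingSet hr]

lemma measure_le_pow_mul_of_subset_cubeIco (hν : ν ≪ volume) (hb : CubeDecay ν b) (hr : 0 < r) :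
    ∀ (M : ℕ) {S : Set (Fin n → ℝ)}, MeasurableSet S → S ⊆ cubeIco q r →
      volume S ≤ ((2 ^ (n + 1))⁻¹) ^ M * volume (cubeIco q r) →
        ν S ≤ b ^ M * ν (cubeIco q r)
  | 0, S, _, hSQ, _ => by simpa using measure_mono hSQ
  | M + 1, S, hS, hSQ, hvol => by
    set c : ℝ≥0∞ := 2 ^ (n + 1)
    have hc : c * c⁻¹ = 1 :=
      ENNReal.mul_inv_cancel (pow_ne_zero _ two_ne_zero) (ENNReal.pow_ne_top ENNReal.ofNat_ne_top)
    have hcS : c * volume S ≤ (c⁻¹) ^ M * volume (cubeIco q r) :=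
      calc c * volume S ≤ c * ((c⁻¹) ^ (M + 1) * volume (cubeIco q r)) := by gcongr
        _ = (c * c⁻¹) * ((c⁻¹) ^ M * volume (cubeIco q r)) := by ring
        _ = (c⁻¹) ^ M * volume (cubeIco q r) := by rw [hc, one_mul]
    have h0 : ¬ IsDenseCell q r S 0 0 := by
      rw [IsDenseCell, dyadicCell_zero, inter_eq_self_of_subset_left hSQ, not_lt]
      exact hcS.trans (mul_le_of_le_one_left' (pow_le_one₀ (by positivity)
        (ENNReal.inv_le_one.2 (one_le_pow₀ one_le_two))))
    calc ν S ≤ b * ν (stoppingSet q r S) := measure_le_mul_stoppingSet hν hb hr hS hSQ h0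
      _ ≤ b * (b ^ M * ν (cubeIco q r)) := by
        gcongr
        exact measure_le_pow_mul_of_subset_cubeIco hν hb hr M measurableSet_stoppingSet
          (stoppingSet_subset hr) ((volume_stoppingSet_le hr hS).trans hcS)
      _ = b ^ (M + 1) * ν (cubeIco q r) := by ring

lemma measure_le_pow_mul_of_subset_cube (hν : ν ≪ volume) (hb : CubeDecay ν b) (hr : 0 < r)
    {M : ℕ} (hS : MeasurableSet S) (hSQ : S ⊆ cube q r)
    (hvol : volume S ≤ ((2 ^ (n + 1))⁻¹) ^ M * volume (cube q r)) :
    ν S ≤ b ^ M * ν (cube q r) := by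
  have hS' : (S ∩ cubeIco q r : Set (Fin n → ℝ)) =ᵐ[volume] S := by
    simpa [inter_eq_left.2 hSQ] using
      (EventuallyEq.rfl : S =ᵐ[volume] S).inter (cubeIco_ae_eq_cube q r)
  rw [← measure_congr (hν.ae_eq hS'), ← measure_congr (hν.ae_eq (cubeIco_ae_eq_cube q r))]
  rw [← measure_congr hS', volume_cube] at hvol
  exact measure_le_pow_mul_of_subset_cubeIco hν hb hr M (hS.inter measurableSet_cubeIco)
    inter_subset_right hvol

end Iteration

lemma exists_le_rpow_of_lt_one {b y : ℝ} (hb : b < 1) (hy : 0 < y) :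
    ∃ δ : ℝ, 0 < δ ∧ δ < 1 ∧ b ≤ y ^ δ := by
  have hlim : Tendsto (fun δ : ℝ => y ^ δ) (𝓝[>] 0) (𝓝 1) := by
    simpa using (Real.continuousAt_const_rpow (b := 0) hy.ne').tendsto.mono_left
      nhdsWithin_le_nhds
  obtain ⟨δ, hbδ, hδ⟩ :=
    ((hlim.eventually (eventually_ge_nhds hb)).and (Ioo_mem_nhdsGT one_pos)).exists
  exact ⟨δ, hδ.1, hδ.2, hbδ⟩

lemma exists_pow_le_mul_rpow {b y : ℝ} (hb0 : 0 ≤ b) (hb : b < 1) (hy0 : 0 < y) (hy : y < 1) :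
    ∃ δ : ℝ, 0 < δ ∧ δ < 1 ∧ ∃ C, 0 < C ∧
      ∀ t, 0 < t → t ≤ 1 → ∃ M : ℕ, t ≤ y ^ M ∧ b ^ M ≤ C * t ^ δ := by
  set b' := max b 2⁻¹
  have hb'0 : 0 < b' := lt_max_of_lt_right (by norm_num)
  obtain ⟨δ, hδ0, hδ1, hb'δ⟩ := exists_le_rpow_of_lt_one (max_lt hb (by norm_num : (2:ℝ)⁻¹ < 1)) hy0
  refine ⟨δ, hδ0, hδ1, b'⁻¹, inv_pos.2 hb'0, fun t ht0 ht1 => ?_⟩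
  obtain ⟨M, hyt, hty⟩ := exists_nat_pow_near_of_lt_one ht0 ht1 hy0 hy
  refine ⟨M, hty, ?_⟩
  calc b ^ M ≤ b' ^ M := pow_le_pow_left₀ hb0 (le_max_left _ _) M
    _ = b'⁻¹ * b' ^ (M + 1) := by field_simp; ring
    _ ≤ b'⁻¹ * (y ^ δ) ^ (M + 1) := by gcongr
    _ = b'⁻¹ * (y ^ (M + 1)) ^ δ := by rw [Real.rpow_pow_comm hy0.le]
    _ ≤ b'⁻¹ * t ^ δ := by gcongr

lemma exists_pow_le_ofReal_mul_rpow {b y : ℝ≥0∞} (hb : b < 1) (hy0 : 0 < y) (hy : y < 1) :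
    ∃ δ : ℝ, 0 < δ ∧ δ < 1 ∧ ∃ C, 0 < C ∧ ∀ t : ℝ≥0∞, 0 < t → t ≤ 1 →
      ∃ M : ℕ, t ≤ y ^ M ∧ b ^ M ≤ ENNReal.ofReal C * t ^ δ := by
  have hbtop : b ≠ ∞ := hb.ne_top
  have hytop : y ≠ ∞ := hy.ne_top
  obtain ⟨δ, hδ0, hδ1, C, hC0, hM⟩ := exists_pow_le_mul_rpow ENNReal.toReal_nonneg
    (ENNReal.toReal_lt_of_lt_ofReal (by simpa using hb)) (ENNReal.toReal_pos hy0.ne' hytop)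
    (ENNReal.toReal_lt_of_lt_ofReal (by simpa using hy))
  refine ⟨δ, hδ0, hδ1, C, hC0, fun t ht0 ht1 => ?_⟩
  have httop : t ≠ ∞ := ne_top_of_le_ne_top ENNReal.one_ne_top ht1
  obtain ⟨M, hty, hbt⟩ := hM t.toReal (ENNReal.toReal_pos ht0.ne' httop)
    (ENNReal.toReal_le_of_le_ofReal zero_le_one (by simpa using ht1))
  refine ⟨M, ?_, ?_⟩
  · rwa [← ENNReal.toReal_pow, ENNReal.toReal_le_toReal httop (ENNReal.pow_ne_top hytop)] at hty
  · rw [← ENNReal.ofReal_toReal (ENNReal.pow_ne_top hbtop), ENNReal.toReal_pow,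
      ← ENNReal.ofReal_toReal httop, ENNReal.ofReal_rpow_of_nonneg ENNReal.toReal_nonneg hδ0.le,
      ← ENNReal.ofReal_mul hC0.le]
    exact ENNReal.ofReal_le_ofReal hbt

section Weight

variable {γ : (Fin n → ℝ) → ℝ}

def weightMeasure (γ : (Fin n → ℝ) → ℝ) : Measure (Fin n → ℝ) :=
  volume.withDensity fun y => ENNReal.ofReal (γ y)

lemma weightMeasure_apply {A : Set (Fin n → ℝ)} (hA : MeasurableSet A) :
    weightMeasure γ A = ∫⁻ y in A, ENNReal.ofReal (γ y) :=
  withDensity_apply _ hA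

lemma weightMeasure_absolutelyContinuous : weightMeasure γ ≪ volume :=
  withDensity_absolutelyContinuous _ _

lemma avg_eq {A : Set (Fin n → ℝ)} (hA : MeasurableSet A) :
    avg A γ = (volume A)⁻¹ * weightMeasure γ A := by
  rw [avg, weightMeasure_apply hA]

lemma weightMeasure_cube_ne_top (hγ : LocallyIntegrable γ volume) (z : Fin n → ℝ) (s : ℝ) :
    weightMeasure γ (cube z s) ≠ ∞ := by
  rw [weightMeasure_apply measurableSet_cube]
  exact (hγ.integrableOn_isCompact isCompact_Icc).lintegral_lt_top.ne

lemma A1Bound.weightMeasure_mul_le {C : ℝ} (hC : 0 ≤ C) (h : A1Bound C γ) {z : Fin n → ℝ}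
    {s : ℝ} (hs : 0 < s) {A : Set (Fin n → ℝ)} (hAQ : A ⊆ cube z s) (hA : MeasurableSet A) :
    weightMeasure γ (cube z s) * (volume A / volume (cube z s)) ≤
      ENNReal.ofReal C * weightMeasure γ A := by
  have hint : ∫⁻ _ in A, avg (cube z s) γ ≤ ∫⁻ y in A, ENNReal.ofReal C * ENNReal.ofReal (γ y) := by
    refine lintegral_mono_ae ((ae_restrict_iff' hA).2 ?_)
    filter_upwards [h z s hs] with y hy hyA
    rw [← ENNReal.ofReal_mul hC]
    exact hy (hAQ hyA)
  rw [setLIntegral_const, lintegral_const_mul' _ _ ENNReal.ofReal_ne_top, ← weightMeasure_apply hA,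
    avg_eq measurableSet_cube] at hint
  calc weightMeasure γ (cube z s) * (volume A / volume (cube z s))
      = (volume (cube z s))⁻¹ * weightMeasure γ (cube z s) * volume A := by
        rw [div_eq_mul_inv]; ring
    _ ≤ ENNReal.ofReal C * weightMeasure γ A := hint

lemma volume_le_weightMeasure_rpow_mul {p p' : ℝ} (hpq : p.HolderConjugate p') (hγ : IsWeight γ)
    {A : Set (Fin n → ℝ)} (hA : MeasurableSet A) :
    volume A ≤ weightMeasure γ A ^ (1 / p) *
      (∫⁻ y in A, ENNReal.ofReal (|(γ y)⁻¹| ^ (p' / p))) ^ (1 / p') := by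
  set g : (Fin n → ℝ) → ℝ≥0∞ := fun y => ENNReal.ofReal (γ y)
  set w : (Fin n → ℝ) → ℝ≥0∞ := fun y => ENNReal.ofReal (|(γ y)⁻¹| ^ (p' / p))
  have hγm : AEMeasurable γ volume := hγ.1.aestronglyMeasurable.aemeasurable
  have hg : AEMeasurable g volume := hγm.ennreal_ofReal
  have hw : AEMeasurable w volume := by fun_prop
  set f : (Fin n → ℝ) → ℝ≥0∞ := fun y => g y ^ (1 / p)
  set f' : (Fin n → ℝ) → ℝ≥0∞ := fun y => w y ^ (1 / p')
  have hff' : ∀ᵐ y ∂volume.restrict A, (f * f') y = 1 := by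
    filter_upwards [ae_restrict_of_ae hγ.2] with y hy
    have hinv : 0 < (γ y)⁻¹ := inv_pos.2 hy
    simp only [Pi.mul_apply, f, f', g, w]
    rw [ENNReal.ofReal_rpow_of_pos hy, ENNReal.ofReal_rpow_of_pos (by positivity),
      ← ENNReal.ofReal_mul (by positivity), abs_of_pos hinv, ← Real.rpow_mul hinv.le,
      div_mul_eq_mul_div, mul_one_div_cancel hpq.symm.ne_zero, Real.inv_rpow hy.le,
      mul_inv_cancel₀ (Real.rpow_pos_of_pos hy _).ne', ENNReal.ofReal_one]
  calc volume A = ∫⁻ y in A, (f * f') y := by rw [lintegral_congr_ae hff', setLIntegral_one]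
    _ ≤ (∫⁻ y in A, f y ^ p) ^ (1 / p) * (∫⁻ y in A, f' y ^ p') ^ (1 / p') :=
        ENNReal.lintegral_mul_le_Lp_mul_Lq _ hpq (hg.pow_const _).restrict (hw.pow_const _).restrict
    _ = weightMeasure γ A ^ (1 / p) * (∫⁻ y in A, w y) ^ (1 / p') := by
        simp only [← ENNReal.rpow_mul, one_div_mul_cancel hpq.ne_zero,
          one_div_mul_cancel hpq.symm.ne_zero, ENNReal.rpow_one, weightMeasure_apply hA, f, f', g]

lemma ApBound.weightMeasure_mul_rpow_le {p C : ℝ} (hp : 1 < p) (h : ApBound p C γ)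
    (hγ : IsWeight γ) {z : Fin n → ℝ} {s : ℝ} (hs : 0 < s) {A : Set (Fin n → ℝ)}
    (hAQ : A ⊆ cube z s) (hA : MeasurableSet A) :
    weightMeasure γ (cube z s) * (volume A / volume (cube z s)) ^ p ≤
      ENNReal.ofReal C * weightMeasure γ A := by
  have hpq : p.HolderConjugate (conjExp p) := Real.HolderConjugate.conjExponent hp
  have hp1 : p / conjExp p = p - 1 := hpq.div_conj_eq_sub_one
  set V := volume (cube z s)
  set N := weightMeasure γ (cube z s)
  set J := ∫⁻ y in cube z s, ENNReal.ofReal (|(γ y)⁻¹| ^ (conjExp p / p))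
  have hV0 : V ≠ 0 := volume_cube_ne_zero z hs
  have hVtop : V ≠ ∞ := volume_cube_ne_top z s
  have hAp : V⁻¹ * N * (V⁻¹ * J) ^ (p - 1) ≤ ENNReal.ofReal C := by
    have := h z s hs
    rwa [avg_eq (γ := γ) measurableSet_cube, avgP, avg, one_div_div, hp1] at this
  have hHolder : volume A ^ p ≤ weightMeasure γ A * J ^ (p - 1) := by
    calc volume A ^ p
        ≤ (weightMeasure γ A ^ (1 / p) * J ^ (1 / conjExp p)) ^ p := by
          gcongr
          exact (volume_le_weightMeasure_rpow_mul hpq hγ hA).trans (mul_le_mul_right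
            (ENNReal.rpow_le_rpow (lintegral_mono_set hAQ) (one_div_nonneg.2 hpq.symm.nonneg)) _)
      _ = weightMeasure γ A * J ^ (p - 1) := by
          rw [ENNReal.mul_rpow_of_nonneg _ _ hpq.nonneg, ← ENNReal.rpow_mul, ← ENNReal.rpow_mul,
            one_div_mul_cancel hpq.ne_zero, ENNReal.rpow_one, one_div_mul_eq_div, hp1]
  have hVp : V⁻¹ ^ p = V⁻¹ * V⁻¹ ^ (p - 1) := by
    conv_lhs => rw [show p = 1 + (p - 1) by ring]
    rw [ENNReal.rpow_add _ _ (ENNReal.inv_ne_zero.2 hVtop) (ENNReal.inv_ne_top.2 hV0),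
      ENNReal.rpow_one]
  calc N * (volume A / V) ^ p = N * V⁻¹ * V⁻¹ ^ (p - 1) * volume A ^ p := by
        rw [div_eq_mul_inv, ENNReal.mul_rpow_of_nonneg _ _ hpq.nonneg, hVp]; ring
    _ ≤ N * V⁻¹ * V⁻¹ ^ (p - 1) * (weightMeasure γ A * J ^ (p - 1)) := by gcongr
    _ = V⁻¹ * N * (V⁻¹ * J) ^ (p - 1) * weightMeasure γ A := by
        rw [ENNReal.mul_rpow_of_nonneg _ _ (by linarith)]; ring
    _ ≤ ENNReal.ofReal C * weightMeasure γ A := by gcongr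

lemma exists_cubeDecay {p : ℝ} (hγ : IsWeight γ) (hAp : (p = 1 ∧ IsA1 γ) ∨ (1 < p ∧ IsAp p γ)) :
    ∃ b < 1, CubeDecay (weightMeasure γ) b := by
  rcases hAp with ⟨-, C, hC, hA1⟩ | ⟨hp, C, -, hApC⟩
  · refine exists_cubeDecay_of_mul_rpow_le (K := ENNReal.ofReal C)
      weightMeasure_absolutelyContinuous (weightMeasure_cube_ne_top hγ.1) zero_le_one
      ENNReal.ofReal_ne_top fun z s hs A hAQ hA => ?_
    rw [ENNReal.rpow_one]
    exact A1Bound.weightMeasure_mul_le hC.le hA1 hs hAQ hA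
  · exact exists_cubeDecay_of_mul_rpow_le weightMeasure_absolutelyContinuous
      (weightMeasure_cube_ne_top hγ.1) (by linarith) ENNReal.ofReal_ne_top
      fun z s hs A hAQ hA => ApBound.weightMeasure_mul_rpow_le hp hApC hγ hs hAQ hA

lemma avg_div_avg_le {S Q : Set (Fin n → ℝ)} (hS : MeasurableSet S) (hQ : MeasurableSet Q)
    (hQ0 : volume Q ≠ 0) (hQtop : volume Q ≠ ∞) {B : ℝ≥0∞}
    (h : weightMeasure γ S ≤ B * weightMeasure γ Q) :
    avg S γ / avg Q γ ≤ B * (volume S / volume Q)⁻¹ := by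
  have hratio : avg S γ / avg Q γ =
      weightMeasure γ S / weightMeasure γ Q * (volume S / volume Q)⁻¹ := by
    rw [avg_eq hS, avg_eq hQ, div_eq_mul_inv, div_eq_mul_inv, div_eq_mul_inv,
      ENNReal.mul_inv (Or.inl (ENNReal.inv_ne_zero.2 hQtop)) (Or.inl (ENNReal.inv_ne_top.2 hQ0)),
      ENNReal.mul_inv (Or.inr (ENNReal.inv_ne_top.2 hQ0)) (Or.inr (ENNReal.inv_ne_zero.2 hQtop)),
      inv_inv]
    ring
  rw [hratio]
  gcongr
  exact ENNReal.div_le_of_le_mul h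

end Weight

end ApReverseRatio

open ApReverseRatio

theorem ap_reverse_ratio_general {n : ℕ} (p : ℝ) (γ : (Fin n → ℝ) → ℝ)
    (hγ : IsWeight γ) (hAp : (p = 1 ∧ IsA1 γ) ∨ (1 < p ∧ IsAp p γ)) :
    ∃ δ : ℝ, 0 < δ ∧ δ < 1 ∧ ∃ C : ℝ, 0 < C ∧
      ∀ (x : Fin n → ℝ) (r : ℝ), 0 < r →
        ∀ S : Set (Fin n → ℝ), S ⊆ cube x r → MeasurableSet S → 0 < volume S →
          avg S γ / avg (cube x r) γ
            ≤ ENNReal.ofReal C * (volume S / volume (cube x r)) ^ (δ - 1) := by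
  obtain ⟨b, hb, hdecay⟩ := exists_cubeDecay hγ hAp
  have h2 : (1 : ℝ≥0∞) < 2 ^ (n + 1) := one_lt_pow₀ one_lt_two n.succ_ne_zero
  obtain ⟨δ, hδ0, hδ1, C, hC0, hM⟩ := exists_pow_le_ofReal_mul_rpow hb
    (ENNReal.inv_pos.2 (ENNReal.pow_ne_top ENNReal.ofNat_ne_top)) (ENNReal.inv_lt_one.2 h2)
  refine ⟨δ, hδ0, hδ1, C, hC0, fun x r hr S hSQ hS hS0 => ?_⟩
  have hQ0 := volume_cube_ne_zero x hr
  have hQtop := volume_cube_ne_top x r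
  set t := volume S / volume (cube x r)
  have ht0 : t ≠ 0 := (ENNReal.div_pos hS0.ne' hQtop).ne'
  have httop : t ≠ ∞ := ENNReal.div_ne_top (ne_top_of_le_ne_top hQtop (measure_mono hSQ)) hQ0
  obtain ⟨M, htM, hbM⟩ := hM t (pos_iff_ne_zero.2 ht0)
    (ENNReal.div_le_of_le_mul (by rw [one_mul]; exact measure_mono hSQ))
  have hνS : weightMeasure γ S ≤ b ^ M * weightMeasure γ (cube x r) :=
    measure_le_pow_mul_of_subset_cube weightMeasure_absolutelyContinuous hdecay hr hS hSQ
      ((ENNReal.div_le_iff hQ0 hQtop).1 htM)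
  calc avg S γ / avg (cube x r) γ ≤ b ^ M * t⁻¹ :=
        avg_div_avg_le hS measurableSet_cube hQ0 hQtop hνS
    _ ≤ ENNReal.ofReal C * t ^ δ * t⁻¹ := by gcongr
    _ = ENNReal.ofReal C * t ^ (δ - 1) := by
        rw [ENNReal.rpow_sub _ _ ht0 httop, ENNReal.rpow_one, div_eq_mul_inv, mul_assoc]

/-- If `γ ∈ A_p`, `1 ≤ p < ∞`, then there are `δ ∈ (0,1)` and `C > 0` such that
`M_S(γ)/M_Q(γ) ≤ C (|S|/|Q|)^{δ-1}` for every cube `Q` and measurable `S ⊆ Q`. -/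
theorem ap_reverse_ratio {n : ℕ} (p : ℝ) (hp : 1 ≤ p) (γ : (Fin n → ℝ) → ℝ)
    (hγ : IsWeight γ) (hAp : (p = 1 ∧ IsA1 γ) ∨ (1 < p ∧ IsAp p γ)) :
    ∃ δ : ℝ, 0 < δ ∧ δ < 1 ∧ ∃ C : ℝ, 0 < C ∧
      ∀ (x : Fin n → ℝ) (r : ℝ), 0 < r →
        ∀ S : Set (Fin n → ℝ), S ⊆ cube x r → MeasurableSet S → 0 < volume S →
          avg S γ / avg (cube x r) γ
            ≤ ENNReal.ofReal C * (volume S / volume (cube x r)) ^ (δ - 1) :=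
  ap_reverse_ratio_general p γ hγ hAp
end
end

section
/- Let 0 < r < p < ∞, s ∈ ℝ, and ω a weight on ℝⁿ with ω^p ∈ A_{p/r}(ℝⁿ). Then the sequence of weights t_k = 2^{ks} ω (k ∈ ℤ) satisfies: there exist C₁, C₂ > 0 such that for all k ≤ j and every cube Q, M_{Q,p}(t_k) · M_{Q, r(p/r)'}(t_j^{-1}) ≤ C₁ 2^{s(k−j)} and M_{Q,p}(t_k)^{-1} · M_{Q,p}(t_j) ≤ C₂ 2^{s(j−k)}. That is, {t_k} belongs to the class X_{(s,s),(r(p/r)',p),p}. -/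
open MeasureTheory ENNReal

noncomputable section

/-- Pulling a positive constant out of a power mean. -/
lemma avgP_const_mul {n : ℕ} (A : Set (Fin n → ℝ)) {e c : ℝ} (he : 0 < e) (hc : 0 < c)
    (f : (Fin n → ℝ) → ℝ) :
    avgP A e (fun y => c * f y) = ENNReal.ofReal c * avgP A e f := by
  unfold avgP avg
  have h1 : ∀ y, ENNReal.ofReal (|c * f y| ^ e)
      = ENNReal.ofReal (c ^ e) * ENNReal.ofReal (|f y| ^ e) := by
    intro y
    rw [abs_mul, abs_of_pos hc, Real.mul_rpow hc.le (abs_nonneg _),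
      ENNReal.ofReal_mul (Real.rpow_nonneg hc.le _)]
  simp only [h1]
  rw [lintegral_const_mul' _ _ ENNReal.ofReal_ne_top,
    show (volume A)⁻¹ * (ENNReal.ofReal (c ^ e) * ∫⁻ y in A, ENNReal.ofReal (|f y| ^ e)) =
      ENNReal.ofReal (c ^ e) * ((volume A)⁻¹ * ∫⁻ y in A, ENNReal.ofReal (|f y| ^ e)) by ring,
    ENNReal.mul_rpow_of_nonneg _ _ (by positivity : (0:ℝ) ≤ 1/e)]
  congr 1
  rw [ENNReal.ofReal_rpow_of_pos (Real.rpow_pos_of_pos hc e), ← Real.rpow_mul hc.le,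
    mul_one_div_cancel he.ne', Real.rpow_one]

/-- Splitting the exponent of a power mean. -/
lemma avgP_mul_exp {n : ℕ} (A : Set (Fin n → ℝ)) {a b : ℝ} (ha : 0 < a) (hb : 0 < b)
    (f : (Fin n → ℝ) → ℝ) :
    avgP A (a * b) f = (avgP A b (fun y => |f y| ^ a)) ^ ((1:ℝ) / a) := by
  unfold avgP
  rw [← ENNReal.rpow_mul,
    show (1:ℝ)/b * (1/a) = 1/(a*b) by rw [one_div_mul_one_div, mul_comm]]
  congr 1
  have : (fun y => |(|f y| ^ a)| ^ b) = fun y => |f y| ^ (a * b) := by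
    funext y
    rw [abs_of_nonneg (Real.rpow_nonneg (abs_nonneg _) _), ← Real.rpow_mul (abs_nonneg _)]
  rw [this]

/-- If `ω^p ∈ A_{p/r}` then the sequence `t_k = 2^{ks} ω` lies in the Tyulenev class
`X_{(s,s),(r(p/r)',p),p}`. -/
theorem exampleWeightSequence {n : ℕ} (r p s : ℝ) (hr : 0 < r) (hrp : r < p)
    (ω : (Fin n → ℝ) → ℝ) (hω : IsWeight ω)
    (hA : IsAp (p / r) (fun y => |ω y| ^ p)) :
    ∃ C₁ C₂ : ℝ, 0 < C₁ ∧ 0 < C₂ ∧ ∀ k j : ℤ, k ≤ j →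
      ∀ (x : Fin n → ℝ) (ρ : ℝ), 0 < ρ →
        (avgP (cube x ρ) p (fun y => (2 : ℝ) ^ ((k : ℝ) * s) * ω y) *
            avgP (cube x ρ) (r * conjExp (p / r))
              (fun y => ((2 : ℝ) ^ ((j : ℝ) * s) * ω y)⁻¹)
          ≤ ENNReal.ofReal (C₁ * 2 ^ (s * ((k : ℝ) - (j : ℝ)))) ∧
        avgP (cube x ρ) p (fun y => (2 : ℝ) ^ ((j : ℝ) * s) * ω y)
          ≤ ENNReal.ofReal (C₂ * 2 ^ (s * ((j : ℝ) - (k : ℝ)))) *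
            avgP (cube x ρ) p (fun y => (2 : ℝ) ^ ((k : ℝ) * s) * ω y)) := by
  obtain ⟨C, hC, hAB⟩ := hA
  have hp : 0 < p := hr.trans hrp
  have hq1 : 1 < p / r := (one_lt_div hr).mpr hrp
  have hq0 : 0 < p / r := by linarith
  have hq'0 : 0 < conjExp (p / r) := div_pos hq0 (by linarith)
  have hqq'0 : 0 < conjExp (p / r) / (p / r) := div_pos hq'0 hq0
  refine ⟨C ^ (1/p), 1, Real.rpow_pos_of_pos hC _, one_pos, ?_⟩
  intro k j _ x ρ hρ
  have hQ := hAB x ρ hρ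
  simp only at hQ
  have hck : (0:ℝ) < 2 ^ ((k:ℝ)*s) := Real.rpow_pos_of_pos two_pos _
  have hcj : (0:ℝ) < 2 ^ ((j:ℝ)*s) := Real.rpow_pos_of_pos two_pos _
  have hcmj : (0:ℝ) < 2 ^ (-((j:ℝ)*s)) := Real.rpow_pos_of_pos two_pos _
  have e1 : avgP (cube x ρ) p (fun y => (2 : ℝ) ^ ((k : ℝ) * s) * ω y)
      = ENNReal.ofReal ((2:ℝ) ^ ((k:ℝ)*s)) * avgP (cube x ρ) p ω :=
    avgP_const_mul _ hp hck ω
  have e1' : avgP (cube x ρ) p (fun y => (2 : ℝ) ^ ((j : ℝ) * s) * ω y)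
      = ENNReal.ofReal ((2:ℝ) ^ ((j:ℝ)*s)) * avgP (cube x ρ) p ω :=
    avgP_const_mul _ hp hcj ω
  have e2 : avgP (cube x ρ) (r * conjExp (p / r))
        (fun y => ((2 : ℝ) ^ ((j : ℝ) * s) * ω y)⁻¹)
      = ENNReal.ofReal ((2:ℝ) ^ (-((j:ℝ)*s))) *
        avgP (cube x ρ) (r * conjExp (p / r)) (fun y => (ω y)⁻¹) := by
    have hfun : (fun y => ((2 : ℝ) ^ ((j : ℝ) * s) * ω y)⁻¹)
        = fun y => (2:ℝ) ^ (-((j:ℝ)*s)) * (ω y)⁻¹ := by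
      funext y
      rw [mul_inv, Real.rpow_neg (by norm_num : (0:ℝ) ≤ 2)]
    rw [hfun]
    exact avgP_const_mul _ (mul_pos hr hq'0) hcmj _
  -- rewrite the second factor via the A_{p/r} quantity
  have hrq' : r * conjExp (p / r) = p * (conjExp (p / r) / (p / r)) := by
    field_simp
  have key : avgP (cube x ρ) (r * conjExp (p / r)) (fun y => (ω y)⁻¹)
      = (avgP (cube x ρ) (conjExp (p / r) / (p / r)) (fun y => (|ω y| ^ p)⁻¹)) ^ ((1:ℝ)/p) := by
    rw [hrq', avgP_mul_exp _ hp hqq'0]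
    congr 2
    funext y
    rw [abs_inv, Real.inv_rpow (abs_nonneg _)]
  -- hQ in terms of avgP _ p ω
  have hbase : avgP (cube x ρ) p ω = (avg (cube x ρ) (fun y => |ω y| ^ p)) ^ ((1:ℝ)/p) := rfl
  constructor
  · calc avgP (cube x ρ) p (fun y => (2 : ℝ) ^ ((k : ℝ) * s) * ω y) *
        avgP (cube x ρ) (r * conjExp (p / r))
          (fun y => ((2 : ℝ) ^ ((j : ℝ) * s) * ω y)⁻¹)
        = ENNReal.ofReal ((2:ℝ) ^ ((k:ℝ)*s) * (2:ℝ) ^ (-((j:ℝ)*s))) *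
          ((avg (cube x ρ) (fun y => |ω y| ^ p) *
            avgP (cube x ρ) (conjExp (p / r) / (p / r)) (fun y => (|ω y| ^ p)⁻¹)) ^ ((1:ℝ)/p)) := by
          rw [e1, e2, key, hbase, ENNReal.ofReal_mul hck.le,
            ENNReal.mul_rpow_of_nonneg _ _ (by positivity : (0:ℝ) ≤ 1/p)]
          ring
      _ ≤ ENNReal.ofReal ((2:ℝ) ^ ((k:ℝ)*s) * (2:ℝ) ^ (-((j:ℝ)*s))) *
          ((ENNReal.ofReal C) ^ ((1:ℝ)/p)) := by
          gcongr
      _ = ENNReal.ofReal (C ^ (1/p) * 2 ^ (s * ((k : ℝ) - (j : ℝ)))) := by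
          rw [ENNReal.ofReal_rpow_of_pos hC, ← ENNReal.ofReal_mul (by positivity),
            ← Real.rpow_add two_pos]
          congr 1
          rw [mul_comm]
          congr 1
          ring
  · rw [e1', e1, one_mul, ← mul_assoc, ← ENNReal.ofReal_mul (by positivity),
      ← Real.rpow_add two_pos, show s * ((j:ℝ) - (k:ℝ)) + (k:ℝ) * s = (j:ℝ) * s by ring]
end
end
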